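/- Each row of P^{⊗3} contains exactly 36 positive entries (equal to 1/8) and exactly 28 negative entries (equal to −1/8), and for any two distinct rows of P^{⊗3} the joint sign pattern over the 64 columns is: 20 columns (+,+), 16 columns (+,−), 16 columns (−,+), and 12 columns (−,−). -/

import Mathlib

open Matrix Finset

noncomputable def P : Matrix (Fin 4) (Fin 4) ℝ :=
  (1/2 : ℝ) • !![1, 1, -1, 1; 1, 1, 1, -1; -1, 1, 1, 1; 1, -1, 1, 1]

/-- The threefold Kronecker power `P^{⊗3}`, indexed by `{0,1,2,3}³`. -/
noncomputable def P3 : Matrix (Fin 4 × Fin 4 × Fin 4) (Fin 4 × Fin 4 × Fin 4) ℝ :=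
  fun i j => P i.1 j.1 * (P i.2.1 j.2.1 * P i.2.2 j.2.2)

/-!
`P` has entries `±1/2`, row sums `1` and orthonormal rows, so its Kronecker cube `P3` has entries
`±1/8`, row sums `1` and orthonormal rows. For `|x| = c > 0` the indicator of `0 < x` is
`(1 + x / c) / 2`, so the number of columns where two rows `u`, `v` are both positive is
`(n + Σu / c + Σv / c + Σuv / c²) / 4`; flipping the signs of rows gives the other patterns.
For `P3` this is `(64 ± 8 ± 8 + 0) / 4`, i.e. `20`, `16`, `16`, `12`, and likewise a single row
has `(64 ± 8) / 2`, i.e. `36` positive and `28` negative entries.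
-/

open scoped Kronecker

section SignCounts

variable {ι : Type*} [Fintype ι] {c : ℝ} {u v : ι → ℝ}

lemma ite_pos_eq_of_abs_eq {x : ℝ} (hc : 0 < c) (hx : |x| = c) :
    (if 0 < x then 1 else 0 : ℝ) = (1 + x / c) / 2 := by
  rcases (abs_eq hc.le).mp hx with rfl | rfl
  · simp [hc, hc.ne']
  · simp [hc.le, hc.ne']

lemma card_filter_pos_of_abs_eq (hc : 0 < c) (hu : ∀ j, |u j| = c) :
    (#{j | 0 < u j} : ℝ) = (Fintype.card ι + (∑ j, u j) / c) / 2 := by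
  simp_rw [natCast_card_filter, ite_pos_eq_of_abs_eq hc (hu _), ← sum_div, sum_add_distrib,
    ← sum_div]
  simp

lemma card_filter_pos_pos_of_abs_eq (hc : 0 < c) (hu : ∀ j, |u j| = c) (hv : ∀ j, |v j| = c) :
    (#{j | 0 < u j ∧ 0 < v j} : ℝ) =
      (Fintype.card ι + (∑ j, u j) / c + (∑ j, v j) / c + (∑ j, u j * v j) / c ^ 2) / 4 := by
  have hj : ∀ j, (if 0 < u j ∧ 0 < v j then 1 else 0 : ℝ) =
      (1 + u j / c + v j / c + u j * v j / c ^ 2) / 4 := by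
    intro j
    rw [← mul_one (1 : ℝ), ← ite_zero_mul_ite_zero, ite_pos_eq_of_abs_eq hc (hu j),
      ite_pos_eq_of_abs_eq hc (hv j)]
    ring
  simp_rw [natCast_card_filter, hj, ← sum_div, sum_add_distrib, ← sum_div]
  simp

end SignCounts

lemma sum_kronecker_row {l m n p : Type*} [Fintype m] [Fintype p] {R : Type*} [CommSemiring R]
    (A : Matrix l m R) (B : Matrix n p R) (i : l × n) :
    ∑ j, (A ⊗ₖ B) i j = (∑ j, A i.1 j) * ∑ j, B i.2 j := by
  simp [Fintype.sum_prod_type, sum_mul_sum]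

lemma P3_eq_kronecker : P3 = P ⊗ₖ (P ⊗ₖ P) := rfl

lemma P_mul_transpose : P * Pᵀ = 1 := by
  ext i j
  fin_cases i <;> fin_cases j <;>
    norm_num [P, mul_apply, Fin.sum_univ_four, cons_val_two, cons_val_three]

lemma P_row_sum (a : Fin 4) : ∑ b, P a b = 1 := by
  fin_cases a <;> norm_num [P, Fin.sum_univ_four, cons_val_two, cons_val_three]

lemma abs_P (a b : Fin 4) : |P a b| = 1 / 2 := by
  fin_cases a <;> fin_cases b <;> norm_num [P]

lemma P3_mul_transpose : P3 * P3ᵀ = 1 := by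
  rw [P3_eq_kronecker, ← kroneckerMap_transpose, ← kroneckerMap_transpose,
    ← mul_kronecker_mul, ← mul_kronecker_mul, P_mul_transpose, one_kronecker_one, one_kronecker_one]

lemma P3_row_sum (i : Fin 4 × Fin 4 × Fin 4) : ∑ j, P3 i j = 1 := by
  rw [P3_eq_kronecker, sum_kronecker_row, sum_kronecker_row]
  simp [P_row_sum]

lemma abs_P3 (i j : Fin 4 × Fin 4 × Fin 4) : |P3 i j| = 1 / 8 := by
  norm_num [P3, abs_mul, abs_P]

lemma P3_row_inner_eq_zero {i i' : Fin 4 × Fin 4 × Fin 4} (hne : i ≠ i') :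
    ∑ j, P3 i j * P3 i' j = 0 := by
  simpa [mul_apply, one_apply_ne hne] using congr_fun (congr_fun P3_mul_transpose i) i'

lemma card_pos_mul_P3_row (i : Fin 4 × Fin 4 × Fin 4) {ε : ℝ} (hε : |ε| = 1) :
    (#{j | 0 < ε * P3 i j} : ℝ) = 32 + 4 * ε := by
  rw [card_filter_pos_of_abs_eq (c := 1 / 8) (by norm_num) (by simp [abs_mul, hε, abs_P3]),
    ← mul_sum, P3_row_sum]
  simp only [Fintype.card_prod, Fintype.card_fin, Nat.cast_mul, Nat.cast_ofNat, mul_one]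
  ring

lemma card_pos_mul_P3_rows {i i' : Fin 4 × Fin 4 × Fin 4} (hne : i ≠ i') {ε δ : ℝ}
    (hε : |ε| = 1) (hδ : |δ| = 1) :
    (#{j | 0 < ε * P3 i j ∧ 0 < δ * P3 i' j} : ℝ) = 16 + 2 * ε + 2 * δ := by
  rw [card_filter_pos_pos_of_abs_eq (c := 1 / 8) (by norm_num) (by simp [abs_mul, hε, abs_P3])
    (by simp [abs_mul, hδ, abs_P3]), ← mul_sum, ← mul_sum, P3_row_sum, P3_row_sum]
  simp_rw [mul_mul_mul_comm, ← mul_sum, P3_row_inner_eq_zero hne]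
  simp only [Fintype.card_prod, Fintype.card_fin, Nat.cast_mul, Nat.cast_ofNat, mul_one]
  ring

/-- Each row of `P^{⊗3}` has 36 positive entries (= 1/8) and 28 negative
entries (= −1/8); any two distinct rows have joint sign pattern
20 `(+,+)`, 16 `(+,−)`, 16 `(−,+)`, 12 `(−,−)`. -/
theorem P3_sign_patterns :
    (∀ i : Fin 4 × Fin 4 × Fin 4,
      (univ.filter (fun j => 0 < P3 i j)).card = 36 ∧
      (univ.filter (fun j => P3 i j < 0)).card = 28 ∧
      (∀ j, 0 < P3 i j → P3 i j = 1/8) ∧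
      (∀ j, P3 i j < 0 → P3 i j = -(1/8))) ∧
    (∀ i i' : Fin 4 × Fin 4 × Fin 4, i ≠ i' →
      (univ.filter (fun j => 0 < P3 i j ∧ 0 < P3 i' j)).card = 20 ∧
      (univ.filter (fun j => 0 < P3 i j ∧ P3 i' j < 0)).card = 16 ∧
      (univ.filter (fun j => P3 i j < 0 ∧ 0 < P3 i' j)).card = 16 ∧
      (univ.filter (fun j => P3 i j < 0 ∧ P3 i' j < 0)).card = 12) := by
  have hpos : |(1 : ℝ)| = 1 := abs_one
  have hneg : |(-1 : ℝ)| = 1 := by norm_num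
  refine ⟨fun i => ⟨?_, ?_, fun j hj => ?_, fun j hj => ?_⟩, fun i i' hne => ⟨?_, ?_, ?_, ?_⟩⟩
  · have h := card_pos_mul_P3_row i hpos; norm_num at h; exact_mod_cast h
  · have h := card_pos_mul_P3_row i hneg; norm_num at h; exact_mod_cast h
  · linarith [abs_of_pos hj ▸ abs_P3 i j]
  · linarith [abs_of_neg hj ▸ abs_P3 i j]
  · have h := card_pos_mul_P3_rows hne hpos hpos; norm_num at h; exact_mod_cast h
  · have h := card_pos_mul_P3_rows hne hpos hneg; norm_num at h; exact_mod_cast h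
  · have h := card_pos_mul_P3_rows hne hneg hpos; norm_num at h; exact_mod_cast h
  · have h := card_pos_mul_P3_rows hne hneg hneg; norm_num at h; exact_mod_cast h
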